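/- For any density matrix ρ on ℂ^d and a GSIC-POVM {M_α}_{α=1}^{d²} with parameter a (Tr(M_α²)=a, Tr(M_αM_β)=(1-da)/(d(d²-1)) for α≠β, Σ_α M_α = I), one has Σ_α (Tr(ρM_α))² ≤ (ad²+1)/(d(d+1)), since Σ_α (Tr(ρM_α))² = ((ad³-1)Tr(ρ²) + d(1-da))/(d(d²-1)) ≤ (ad²+1)/(d(d+1)) using Tr(ρ²) ≤ 1. -/

import Mathlib

open Matrix Finset
open scoped ComplexOrder

/-!
The frame operator `S X = ∑ α, Tr (X M_α) • M_α` of a family whose Gram matrix is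
`(a - t) I + t J` sends each `M_β` to `(a - t) M_β + t • 1`. If `a ≠ t` the Gram matrix is
nonsingular, so the `d²` matrices `M_α` form a basis of `Matrix (Fin d) (Fin d) ℂ` and
`S X = (a - t) X + t d Tr X • 1` for every `X`; if `a = t` all `M_α` equal `1 / d²` and the same
formula holds. Pairing `S ρ` with `ρ` gives `∑ Tr (ρ M_α)² = (a - t) Tr ρ² + t d`, and
`Tr ρ² ≤ (Tr ρ)² = 1` bounds the right-hand side.
-/

lemma Finset.sum_ite_eq_smul_add_smul_sum {ι R V : Type*} [Fintype ι] [DecidableEq ι] [Ring R]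
    [AddCommGroup V] [Module R V] (α β : R) (v : ι → V) (i : ι) :
    ∑ j, (if i = j then α else β) • v j = (α - β) • v i + β • ∑ j, v j := by
  have h : ∀ j, (if i = j then α else β) • v j = (if i = j then (α - β) • v j else 0) + β • v j :=
    fun j => by split_ifs <;> simp [sub_smul]
  simp only [h, sum_add_distrib, sum_ite_eq, mem_univ, if_true, smul_sum]

namespace Matrix

section Hermitian

variable {n : Type*} [Fintype n]

lemma IsHermitian.ofReal_re_trace_mul {A B : Matrix n n ℂ} (hA : A.IsHermitian)
    (hB : B.IsHermitian) : ((A * B).trace.re : ℂ) = (A * B).trace := by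
  refine Complex.conj_eq_iff_re.mp ?_
  rw [← Complex.star_def, ← trace_conjTranspose, conjTranspose_mul, hA.eq, hB.eq, trace_mul_comm]

variable [DecidableEq n]

lemma IsHermitian.ofReal_re_trace {A : Matrix n n ℂ} (hA : A.IsHermitian) :
    (A.trace.re : ℂ) = A.trace := by
  simpa using hA.ofReal_re_trace_mul isHermitian_one

lemma IsHermitian.trace_mul_self {A : Matrix n n ℂ} (hA : A.IsHermitian) :
    (A * A).trace = ∑ i, ((hA.eigenvalues i ^ 2 : ℝ) : ℂ) := by
  conv_lhs => rw [hA.spectral_theorem, ← map_mul, Unitary.conjStarAlgAut_apply, trace_mul_cycle,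
    Unitary.coe_star_mul_self, one_mul, diagonal_mul_diagonal, trace_diagonal]
  simp [sq]

lemma PosSemidef.re_trace_mul_self_le {A : Matrix n n ℂ} (hA : A.PosSemidef) :
    (A * A).trace.re ≤ A.trace.re ^ 2 := by
  rw [hA.1.trace_mul_self, hA.1.trace_eq_sum_eigenvalues]
  simpa [Complex.re_sum, ← Complex.ofReal_pow] using
    sum_sq_le_sq_sum_of_nonneg (s := univ) fun i _ => hA.eigenvalues_nonneg i

end Hermitian

section Frame

variable {n ι : Type*} [Fintype n] [Fintype ι]

def frameOperator (M : ι → Matrix n n ℂ) : Matrix n n ℂ →ₗ[ℂ] Matrix n n ℂ where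
  toFun X := ∑ i, (X * M i).trace • M i
  map_add' X Y := by simp only [add_mul, trace_add, add_smul, sum_add_distrib]
  map_smul' c X := by simp only [smul_mul_assoc, trace_smul, smul_eq_mul, mul_smul, smul_sum,
    RingHom.id_apply]

lemma frameOperator_apply (M : ι → Matrix n n ℂ) (X : Matrix n n ℂ) :
    frameOperator M X = ∑ i, (X * M i).trace • M i := rfl

variable [DecidableEq n] [DecidableEq ι]

variable {M : ι → Matrix n n ℂ} {a t : ℝ}
  (hG : ∀ i j, (M i * M j).trace = if i = j then (a : ℂ) else t)
include hG

omit [DecidableEq n] [Fintype ι] in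
lemma eq_of_gram_of_eq (hM : ∀ i, (M i).IsHermitian) (hat : a = t) (i j : ι) : M i = M j := by
  rw [← sub_eq_zero, ← trace_conjTranspose_mul_self_eq_zero_iff, conjTranspose_sub, (hM i).eq,
    (hM j).eq]
  simp only [sub_mul, mul_sub, trace_sub, hG]
  split_ifs <;> simp [hat]

-- `a - t` and `a - t + t * card ι` are the eigenvalues of the Gram matrix.
lemma linearIndependent_of_gram (hat : a ≠ t) (hdet : (a - t + t * Fintype.card ι : ℂ) ≠ 0) :
    LinearIndependent ℂ M := by
  rw [Fintype.linearIndependent_iff]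
  intro g hg
  have hrow : ∀ i, ((a - t : ℂ)) * g i + t * ∑ j, g j = 0 := fun i => by
    have h := congrArg (fun X => (M i * X).trace) hg
    simp only [mul_sum, mul_smul_comm, trace_sum, trace_smul, hG, mul_zero, trace_zero] at h
    simp only [smul_eq_mul, mul_comm (g _)] at h
    simpa only [← smul_eq_mul, sum_ite_eq_smul_add_smul_sum] using h
  have hs : ∑ j, g j = 0 := by
    have h := sum_congr rfl fun i (_ : i ∈ univ) => hrow i
    rw [sum_add_distrib, ← mul_sum, sum_const, card_univ] at h
    simp only [nsmul_eq_mul, sum_const_zero] at h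
    refine (mul_eq_zero.mp (?_ : (a - t + t * Fintype.card ι : ℂ) * ∑ j, g j = 0)).resolve_left hdet
    linear_combination h
  intro i
  simpa [hs, sub_eq_zero, hat] using hrow i

variable (hsum : ∑ i, M i = 1)
include hsum

lemma frameOperator_apply_of_gram (j : ι) :
    frameOperator M (M j) = ((a - t : ℝ) : ℂ) • M j + (t : ℂ) • 1 := by
  simp only [frameOperator_apply, hG, sum_ite_eq_smul_add_smul_sum, hsum, Complex.ofReal_sub]

lemma trace_eq_of_gram (j : ι) : (M j).trace = a - t + t * Fintype.card ι := by
  have h : (M j).trace = ∑ i, (if j = i then (a : ℂ) else t) • (1 : ℂ) := by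
    simp only [← hG, smul_eq_mul, mul_one, ← trace_sum, ← mul_sum, hsum]
  rw [h, sum_ite_eq_smul_add_smul_sum]
  simp

lemma card_mul_trace_eq_one [Nonempty n] (hcard : Fintype.card ι = Fintype.card n ^ 2) (j : ι) :
    Fintype.card n * (M j).trace = 1 := by
  have h : (Fintype.card n : ℂ) = Fintype.card ι * (M j).trace := by
    rw [← trace_one, ← hsum, trace_sum, sum_congr rfl fun i _ => (trace_eq_of_gram hG hsum i),
      ← trace_eq_of_gram hG hsum j, sum_const, card_univ, nsmul_eq_mul]
  rw [hcard, Nat.cast_pow, sq, mul_assoc] at h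
  exact (mul_right_eq_self₀.mp h.symm).resolve_right (by simp)


lemma frameOperator_eq_of_gram_of_eq (hM : ∀ i, (M i).IsHermitian) [Nonempty n]
    (hcard : Fintype.card ι = Fintype.card n ^ 2) (hat : a = t) (X : Matrix n n ℂ) :
    frameOperator M X = ((a - t : ℝ) : ℂ) • X + (t * Fintype.card n * X.trace) • 1 := by
  have hι : 0 < Fintype.card ι := by rw [hcard]; positivity
  obtain ⟨i₀⟩ := Fintype.card_pos_iff.mp hι
  have hconst : ∀ i, M i = M i₀ := fun i => eq_of_gram_of_eq hG hM hat i i₀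
  have hscalar : M i₀ = (Fintype.card ι : ℂ)⁻¹ • 1 := by
    rw [← hsum, sum_congr rfl fun i _ => hconst i, sum_const, card_univ, ← Nat.cast_smul_eq_nsmul ℂ,
      smul_smul, inv_mul_cancel₀ (by exact_mod_cast hι.ne'), one_smul]
  have hframe : frameOperator M X = (X * M i₀).trace • 1 := by
    rw [frameOperator_apply, ← hsum, smul_sum]
    exact sum_congr rfl fun i _ => by rw [hconst i]
  have hcoef : (t : ℂ) * Fintype.card n = (Fintype.card ι : ℂ)⁻¹ := by
    calc (t : ℂ) * Fintype.card n = (M i₀ * M i₀).trace * Fintype.card n := by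
          rw [hG, if_pos rfl, hat]
      _ = (Fintype.card ι : ℂ)⁻¹ * (Fintype.card n * (M i₀).trace) := by
          nth_rewrite 1 [hscalar]
          rw [smul_mul_assoc, one_mul, trace_smul, smul_eq_mul]
          ring
      _ = (Fintype.card ι : ℂ)⁻¹ := by rw [card_mul_trace_eq_one hG hsum hcard, mul_one]
  rw [hframe, hat, sub_self, Complex.ofReal_zero, zero_smul, zero_add, hcoef, hscalar,
    mul_smul_comm, mul_one, trace_smul, smul_eq_mul]

lemma frameOperator_eq_of_gram_of_ne [Nonempty n] (hcard : Fintype.card ι = Fintype.card n ^ 2)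
    (hat : a ≠ t) (X : Matrix n n ℂ) :
    frameOperator M X = ((a - t : ℝ) : ℂ) • X + (t * Fintype.card n * X.trace) • 1 := by
  have hι : 0 < Fintype.card ι := by rw [hcard]; positivity
  obtain ⟨i₀⟩ := Fintype.card_pos_iff.mp hι
  have hli : LinearIndependent ℂ M := by
    refine linearIndependent_of_gram hG hat ?_
    rw [← trace_eq_of_gram hG hsum i₀]
    exact right_ne_zero_of_mul_eq_one (card_mul_trace_eq_one hG hsum hcard i₀)
  have hspan := hli.span_eq_top_of_card_eq_finrank' (by simp [Module.finrank_matrix, hcard, sq])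
  have hext : frameOperator M = ((a - t : ℝ) : ℂ) • LinearMap.id +
      ((t * Fintype.card n : ℂ)) • (traceLinearMap n ℂ ℂ).smulRight 1 := by
    refine LinearMap.ext_on_range hspan fun j => ?_
    rw [frameOperator_apply_of_gram hG hsum]
    simp [smul_smul, mul_assoc, card_mul_trace_eq_one hG hsum hcard j]
  simpa [smul_smul] using LinearMap.congr_fun hext X

lemma frameOperator_eq_of_gram (hM : ∀ i, (M i).IsHermitian) [Nonempty n]
    (hcard : Fintype.card ι = Fintype.card n ^ 2) (X : Matrix n n ℂ) :
    frameOperator M X = ((a - t : ℝ) : ℂ) • X + (t * Fintype.card n * X.trace) • 1 := by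
  rcases eq_or_ne a t with hat | hat
  · exact frameOperator_eq_of_gram_of_eq hG hsum hM hcard hat X
  · exact frameOperator_eq_of_gram_of_ne hG hsum hcard hat X

lemma sum_trace_mul_sq_of_gram (hM : ∀ i, (M i).IsHermitian) [Nonempty n]
    (hcard : Fintype.card ι = Fintype.card n ^ 2) (X : Matrix n n ℂ) :
    ∑ i, (X * M i).trace ^ 2 = (a - t) * (X * X).trace + t * Fintype.card n * X.trace ^ 2 := by
  have h := congrArg (fun Y => (X * Y).trace) (frameOperator_eq_of_gram hG hsum hM hcard X)
  simp only [frameOperator_apply, mul_sum, mul_smul_comm, trace_sum, trace_smul, smul_eq_mul,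
    mul_add, trace_add, mul_one, Complex.ofReal_sub] at h
  simpa only [sq, mul_assoc] using h

lemma sum_re_trace_mul_sq_of_gram (hM : ∀ i, (M i).IsHermitian) [Nonempty n]
    (hcard : Fintype.card ι = Fintype.card n ^ 2) {X : Matrix n n ℂ} (hX : X.IsHermitian) :
    ∑ i, (X * M i).trace.re ^ 2 =
      (a - t) * (X * X).trace.re + t * Fintype.card n * X.trace.re ^ 2 := by
  apply Complex.ofReal_injective
  push_cast
  simp only [hX.ofReal_re_trace_mul, hX.ofReal_re_trace, hM, hX]
  exact sum_trace_mul_sq_of_gram hG hsum hM hcard X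

end Frame

end Matrix

theorem gsic_purity_bound_general {d : ℕ} (hd : 1 < d) (a : ℝ)
    (ha : 1 / (d : ℝ) ^ 3 ≤ a)
    (M : Fin (d ^ 2) → Matrix (Fin d) (Fin d) ℂ)
    (hpsd : ∀ α, (M α).PosSemidef)
    (hsum : ∑ α, M α = 1)
    (ha2 : ∀ α, ((M α * M α).trace).re = a)
    (hab : ∀ α β, α ≠ β → ((M α * M β).trace).re =
      (1 - d * a) / (d * ((d : ℝ) ^ 2 - 1)))
    (ρ : Matrix (Fin d) (Fin d) ℂ) (hρ : ρ.PosSemidef) (hρ1 : ρ.trace = 1) :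
    (∑ α, ((ρ * M α).trace.re) ^ 2 =
      ((a * d ^ 3 - 1) * ((ρ * ρ).trace.re) + d * (1 - d * a)) /
        (d * ((d : ℝ) ^ 2 - 1))) ∧
    ∑ α, ((ρ * M α).trace.re) ^ 2 ≤ (a * d ^ 2 + 1) / (d * (d + 1)) := by
  have hd' : (1 : ℝ) < d := by exact_mod_cast hd
  have : NeZero d := ⟨by omega⟩
  set t : ℝ := (1 - d * a) / (d * ((d : ℝ) ^ 2 - 1)) with ht
  have hM : ∀ α, (M α).IsHermitian := fun α => (hpsd α).1
  have hG : ∀ α β, (M α * M β).trace = if α = β then (a : ℂ) else t := fun α β => by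
    rw [← (hM α).ofReal_re_trace_mul (hM β)]
    split_ifs with h
    · subst h; rw [ha2]
    · rw [hab α β h]
  have hsq := sum_re_trace_mul_sq_of_gram hG hsum hM (by simp) hρ.1
  rw [Fintype.card_fin, hρ1, Complex.one_re, one_pow, mul_one] at hsq
  have hpure : (ρ * ρ).trace.re ≤ 1 := by simpa [hρ1] using hρ.re_trace_mul_self_le
  have hd2 : (d : ℝ) ^ 2 - 1 ≠ 0 := by nlinarith
  have hcoef : a - t = (a * d ^ 3 - 1) / (d * ((d : ℝ) ^ 2 - 1)) := by
    rw [ht]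
    field_simp
    ring
  refine ⟨by rw [hsq, ht]; field_simp; ring, ?_⟩
  have hcoef_nonneg : 0 ≤ a - t := by
    rw [hcoef]
    have : 1 ≤ a * d ^ 3 := by rwa [div_le_iff₀ (by positivity)] at ha
    apply div_nonneg <;> nlinarith
  calc ∑ α, ((ρ * M α).trace.re) ^ 2 ≤ (a - t) * 1 + t * d := by
        rw [hsq]; gcongr
    _ = (a * d ^ 2 + 1) / (d * (d + 1)) := by
        rw [ht]
        field_simp
        ring

theorem gsic_purity_bound {d : ℕ} (hd : 1 < d) (a : ℝ)
    (ha : 1 / (d : ℝ) ^ 3 ≤ a) (ha' : a ≤ 1 / (d : ℝ) ^ 2)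
    (M : Fin (d ^ 2) → Matrix (Fin d) (Fin d) ℂ)
    (hpsd : ∀ α, (M α).PosSemidef)
    (hsum : ∑ α, M α = 1)
    (ha2 : ∀ α, ((M α * M α).trace).re = a)
    (hab : ∀ α β, α ≠ β → ((M α * M β).trace).re =
      (1 - d * a) / (d * ((d : ℝ) ^ 2 - 1)))
    (ρ : Matrix (Fin d) (Fin d) ℂ) (hρ : ρ.PosSemidef) (hρ1 : ρ.trace = 1) :
    (∑ α, ((ρ * M α).trace.re) ^ 2 =
      ((a * d ^ 3 - 1) * ((ρ * ρ).trace.re) + d * (1 - d * a)) /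
        (d * ((d : ℝ) ^ 2 - 1))) ∧
    ∑ α, ((ρ * M α).trace.re) ^ 2 ≤ (a * d ^ 2 + 1) / (d * (d + 1)) :=
  gsic_purity_bound_general hd a ha M hpsd hsum ha2 hab ρ hρ hρ1
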